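/- For every nonnegative integer m and all integers i, l with 1 ≤ l ≤ i ≤ m+1: the polynomial g_{m,i}(t) has degree at most m+1−i, and ∑_{j=l}^{i} f_{i−1,j}(t)·g_{j−1,l}(t) = δ_{i,l} (equal to 1 if i = l and 0 otherwise); i.e., the lower triangular matrix with (i,j) entry g_{i−1,j}(t) is the inverse of the lower triangular matrix A_m(t) with (i,j) entry f_{i−1,j}(t), 1 ≤ j ≤ i ≤ m+1. -/

import Mathlib

open Polynomial PowerSeries

/-- The polynomials `f_{m,i}(t)` defined recursively. -/
noncomputable def fmi : ℕ → ℕ → Polynomial ℚ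
  | 0, 0 => Polynomial.C (1/2) * Polynomial.X - 1
  | 0, 1 => 1
  | 0, _ + 2 => 0
  | m + 1, 0 => Polynomial.X * Polynomial.derivative (fmi m 0)
  | m + 1, i + 1 =>
    if i = m + 1 then -((m : ℚ) + 1) • fmi m (m + 1)
    else if i + 1 ≤ m + 1 then
      Polynomial.X * Polynomial.derivative (fmi m (i + 1))
        + Polynomial.C ((i : ℚ) + 1) * (1 - Polynomial.X) * fmi m (i + 1)
        - Polynomial.C (i : ℚ) * fmi m i
    else 0

/-- The polynomials `g_{m,i}(t)` defined recursively. -/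
noncomputable def gmi : ℕ → ℕ → Polynomial ℚ
  | m, i =>
    if i = m + 1 then Polynomial.C ((-1 : ℚ) ^ m / m.factorial)
    else if h : 1 ≤ i ∧ i ≤ m then
      Polynomial.C ((-1 : ℚ) ^ (m + 1) / m.factorial) *
        ∑ j ∈ (Finset.Icc i m).attach, fmi m j.1 * gmi (j.1 - 1) i
    else 0
  termination_by m i => m
  decreasing_by
    have hj := Finset.mem_Icc.mp j.2
    omega

/-!
The recursion for `g_{m,i}` is forward substitution for the lower triangular system `A_m G = I`.
The diagonal entry of `A_m` in row `m + 1` is `f_{m,m+1} = (-1)^m m!`, and the prefactor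
`(-1)^{m+1}/m!` in the recursion is minus its inverse, so the off-diagonal entries of that row of
`A_m G` cancel while the diagonal one is `f_{m,m+1} g_{m,m+1} = 1`. The degree bound follows by
strong induction from `deg f_{m,j} ≤ m + 1 - j`: each summand `f_{m,j} g_{j-1,i}` has degree at most
`(m + 1 - j) + (j - i)`.
-/

namespace Polynomial

variable {R : Type*}

lemma natDegree_X_mul_derivative_le [Semiring R] (p : R[X]) :
    (X * derivative p).natDegree ≤ p.natDegree + 1 :=
  (natDegree_mul_le_of_le natDegree_X_le (natDegree_derivative_le p)).trans (by omega)

lemma natDegree_C_mul_one_sub_X_mul_le [Ring R] (a : R) (p : R[X]) :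
    (C a * (1 - X) * p).natDegree ≤ p.natDegree + 1 := by
  have h : (1 - X : R[X]).natDegree ≤ 1 :=
    (natDegree_sub_le_of_le natDegree_one.le natDegree_X_le).trans (by simp)
  rw [mul_assoc, add_comm]
  exact (natDegree_C_mul_le _ _).trans (natDegree_mul_le_of_le h le_rfl)

end Polynomial

lemma fmi_succ_zero (m : ℕ) : fmi (m + 1) 0 = Polynomial.X * derivative (fmi m 0) := by
  rw [fmi]

lemma fmi_succ_succ_self (m : ℕ) : fmi (m + 1) (m + 2) = -((m : ℚ) + 1) • fmi m (m + 1) := by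
  rw [fmi, if_pos rfl]

lemma fmi_succ_succ_of_le {m i : ℕ} (h : i ≤ m) :
    fmi (m + 1) (i + 1) = Polynomial.X * derivative (fmi m (i + 1))
      + Polynomial.C ((i : ℚ) + 1) * (1 - Polynomial.X) * fmi m (i + 1)
      - Polynomial.C (i : ℚ) * fmi m i := by
  rw [fmi, if_neg (by omega), if_pos (by omega)]

lemma fmi_eq_zero_of_lt {m i : ℕ} (h : m + 1 < i) : fmi m i = 0 := by
  obtain ⟨k, rfl⟩ : ∃ k, i = k + 2 := ⟨i - 2, by omega⟩
  cases m with
  | zero => rw [fmi]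
  | succ m => rw [fmi, if_neg (by omega), if_neg (by omega)]

lemma fmi_self_succ (m : ℕ) : fmi m (m + 1) = Polynomial.C ((-1 : ℚ) ^ m * m.factorial) := by
  induction m with
  | zero => simp [fmi]
  | succ m ih =>
    rw [fmi_succ_succ_self, ih, Polynomial.smul_C, smul_eq_mul, Nat.factorial_succ]
    push_cast [pow_succ]
    ring_nf

lemma natDegree_fmi_le (m i : ℕ) : (fmi m i).natDegree ≤ m + 1 - i := by
  induction m generalizing i with
  | zero =>
    rcases i with _ | _ | i
    · rw [fmi]
      compute_degree!
    · simp [fmi]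
    · simp [fmi_eq_zero_of_lt]
  | succ m ih =>
    rcases i with _ | i
    · rw [fmi_succ_zero]
      exact (natDegree_X_mul_derivative_le _).trans (by have := ih 0; omega)
    rcases lt_trichotomy i (m + 1) with h | rfl | h
    · rw [fmi_succ_succ_of_le (by omega)]
      have h₁ := ih (i + 1)
      have h₂ := ih i
      refine (natDegree_sub_le_of_le (natDegree_add_le_of_degree_le
        (natDegree_X_mul_derivative_le _) (natDegree_C_mul_one_sub_X_mul_le _ _))
        (natDegree_C_mul_le _ _)).trans ?_
      omega
    · rw [fmi_succ_succ_self]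
      exact ((natDegree_smul_le _ _).trans (ih _)).trans (by omega)
    · simp [fmi_eq_zero_of_lt (show m + 1 + 1 < i + 1 by omega)]

lemma gmi_self_succ (m : ℕ) : gmi m (m + 1) = Polynomial.C ((-1 : ℚ) ^ m / m.factorial) := by
  rw [gmi, if_pos rfl]

lemma gmi_of_le {m i : ℕ} (h₁ : 1 ≤ i) (h₂ : i ≤ m) :
    gmi m i = Polynomial.C ((-1 : ℚ) ^ (m + 1) / m.factorial) *
      ∑ j ∈ Finset.Icc i m, fmi m j * gmi (j - 1) i := by
  rw [gmi, if_neg (by omega), dif_pos ⟨h₁, h₂⟩,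
    Finset.sum_attach _ (fun j => fmi m j * gmi (j - 1) i)]

lemma gmi_eq_zero {m i : ℕ} (h : i = 0 ∨ m + 1 < i) : gmi m i = 0 := by
  rw [gmi, if_neg (by omega), dif_neg (by omega)]

lemma natDegree_gmi_le (m i : ℕ) : (gmi m i).natDegree ≤ m + 1 - i := by
  induction m using Nat.strong_induction_on generalizing i with
  | _ m ih =>
  by_cases hi : 1 ≤ i ∧ i ≤ m
  · rw [gmi_of_le hi.1 hi.2]
    refine (natDegree_C_mul_le _ _).trans (natDegree_sum_le_of_forall_le _ _ ?_)
    intro j hj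
    have hj := Finset.mem_Icc.mp hj
    exact (natDegree_mul_le_of_le (natDegree_fmi_le m j) (ih (j - 1) (by omega) i)).trans
      (by omega)
  · rcases eq_or_ne i (m + 1) with rfl | hne
    · simp [gmi_self_succ]
    · simp [gmi_eq_zero (show i = 0 ∨ m + 1 < i by omega)]

lemma neg_one_pow_mul_factorial_mul_div_factorial (m k : ℕ) :
    (-1 : ℚ) ^ m * m.factorial * ((-1) ^ k / m.factorial) = (-1) ^ (m + k) := by
  have : (m.factorial : ℚ) ≠ 0 := by positivity
  field_simp
  ring

lemma fmi_self_succ_mul_gmi_self_succ (m : ℕ) : fmi m (m + 1) * gmi m (m + 1) = 1 := by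
  rw [fmi_self_succ, gmi_self_succ, ← Polynomial.C_mul,
    neg_one_pow_mul_factorial_mul_div_factorial, Even.neg_one_pow ⟨m, rfl⟩, Polynomial.C_1]

lemma fmi_self_succ_mul_gmi_of_le {m i : ℕ} (h₁ : 1 ≤ i) (h₂ : i ≤ m) :
    fmi m (m + 1) * gmi m i = -∑ j ∈ Finset.Icc i m, fmi m j * gmi (j - 1) i := by
  rw [fmi_self_succ, gmi_of_le h₁ h₂, ← mul_assoc, ← Polynomial.C_mul,
    neg_one_pow_mul_factorial_mul_div_factorial, Odd.neg_one_pow ⟨m, by ring⟩, Polynomial.C_neg,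
    Polynomial.C_1, neg_one_mul]

lemma sum_fmi_mul_gmi {i l : ℕ} (hl : 1 ≤ l) :
    ∑ j ∈ Finset.Icc l i, fmi (i - 1) j * gmi (j - 1) l = if i = l then 1 else 0 := by
  rcases lt_trichotomy i l with h | rfl | h
  · simp [Finset.Icc_eq_empty_of_lt h, h.ne]
  · obtain ⟨m, rfl⟩ : ∃ m, i = m + 1 := ⟨i - 1, by omega⟩
    simp [fmi_self_succ_mul_gmi_self_succ]
  · obtain ⟨m, rfl⟩ : ∃ m, i = m + 1 := ⟨i - 1, by omega⟩
    rw [Finset.sum_Icc_succ_top (by omega), Nat.add_sub_cancel,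
      fmi_self_succ_mul_gmi_of_le hl (by omega), if_neg h.ne']
    exact add_neg_cancel _

theorem gmi_degree_and_inverse_general (m i l : ℕ) (hl : 1 ≤ l) :
    (gmi m i).degree ≤ (m + 1 - i : ℕ) ∧
    (∑ j ∈ Finset.Icc l i, fmi (i - 1) j * gmi (j - 1) l)
      = if i = l then 1 else 0 :=
  ⟨natDegree_le_iff_degree_le.mp (natDegree_gmi_le m i), sum_fmi_mul_gmi hl⟩

theorem gmi_degree_and_inverse (m i l : ℕ) (hl : 1 ≤ l) (hli : l ≤ i) (him : i ≤ m + 1) :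
    (gmi m i).degree ≤ (m + 1 - i : ℕ) ∧
    (∑ j ∈ Finset.Icc l i, fmi (i - 1) j * gmi (j - 1) l)
      = if i = l then 1 else 0 :=
  gmi_degree_and_inverse_general m i l hl
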